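/- In a structured relational model, the combined relation does not constrain root nodes jointly beyond their local relations: if M = (V, E, 𝒮) is a structured model and R ⊆ V is the set of roots (nodes with no parents), then (⊗𝒮) ↓ R = ⊗{s_v | v ∈ R}, provided the dag is such that every node's local relation extends every parent assignment (the structured-model condition s_v ↓ pa(v) = e_{pa(v)}). -/

import Mathlib

/-- A relational structure over variables of type `ι`: a domain of variables and a
set of (total representatives of) assignments, cylindrical over the domain. -/
structure RelStr (ι : Type*) where
  dom : Set ι
  A : Set (ι → Bool)
  cyl : ∀ u v : ι → Bool, (∀ x ∈ dom, u x = v x) → u ∈ A → v ∈ A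

namespace RelStr
variable {ι : Type*}

/-- Combination (join) of relational structures. -/
def comb (s t : RelStr ι) : RelStr ι where
  dom := s.dom ∪ t.dom
  A := s.A ∩ t.A
  cyl := fun u v h hu =>
    ⟨s.cyl u v (fun x hx => h x (Or.inl hx)) hu.1,
     t.cyl u v (fun x hx => h x (Or.inr hx)) hu.2⟩

/-- Marginalization (projection) of a relational structure onto a set of variables. -/
def marg (s : RelStr ι) (X : Set ι) : RelStr ι where
  dom := s.dom ∩ X
  A := {u | ∃ a ∈ s.A, ∀ x ∈ s.dom ∩ X, u x = a x}
  cyl := fun u v h hu => by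
    obtain ⟨a, ha, hag⟩ := hu
    exact ⟨a, ha, fun x hx => (h x hx).symm.trans (hag x hx)⟩

/-- The full relational structure `e_X` on variables `X`. -/
def full (X : Set ι) : RelStr ι where
  dom := X
  A := Set.univ
  cyl := fun _ _ _ _ => trivial

/-- Variable elimination. -/
def elim (s : RelStr ι) (x : ι) : RelStr ι := s.marg (s.dom \ {x})

/-- Combination of a finite family (list) of relational structures. -/
def bigComb (l : List (RelStr ι)) : RelStr ι := l.foldr comb (full ∅)

end RelStr

/-- A structured relational model: a finite dag `(V, E)` together with a local
relational structure `s v` for each node `v ∈ V`, whose domain is `v` together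
with its parents, and which does not constrain its parents. -/
structure StructModel (ι : Type*) where
  V : Finset ι
  E : ι → ι → Prop
  s : ι → RelStr ι
  acyclic : ∀ v, ¬ Relation.TransGen E v v
  edge_mem : ∀ u v, E u v → u ∈ V ∧ v ∈ V
  dom_eq : ∀ v ∈ V, (s v).dom = insert v {u | E u v}
  no_constrain : ∀ v ∈ V, (s v).marg {u | E u v} = RelStr.full {u | E u v}

/-- The combined relation `⊗𝒮` of a structured model. -/
noncomputable def StructModel.combined {ι : Type*} (M : StructModel ι) : RelStr ι :=
  RelStr.bigComb (M.V.toList.map M.s)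

/-! An assignment satisfying the local relations of the roots extends to one satisfying every
local relation: fix the non-root nodes one at a time, each chosen parentless among those left,
picking its value so that its own relation holds, which is possible because `s v` leaves its
parents unconstrained. Changing the value at `v` only matters to `s v` and to the relations of
the children of `v`, which are still to be fixed. The converse inclusion is immediate since the
domain of a root relation is the root itself. -/

namespace RelStr
variable {ι : Type*}

@[ext]
lemma ext {s t : RelStr ι} (hdom : s.dom = t.dom) (hA : s.A = t.A) : s = t := by
  cases s; cases t; congr

lemma mem_A_congr (s : RelStr ι) {u v : ι → Bool} (h : ∀ x ∈ s.dom, u x = v x) :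
    u ∈ s.A ↔ v ∈ s.A :=
  ⟨s.cyl u v h, s.cyl v u fun x hx => (h x hx).symm⟩

lemma update_mem_A_iff [DecidableEq ι] (s : RelStr ι) {x : ι} (hx : x ∉ s.dom)
    (u : ι → Bool) (b : Bool) : Function.update u x b ∈ s.A ↔ u ∈ s.A :=
  s.mem_A_congr fun _ hy => Function.update_of_ne (ne_of_mem_of_not_mem hy hx) b u

lemma bigComb_dom (l : List (RelStr ι)) : (bigComb l).dom = ⋃ s ∈ l, s.dom := by
  induction l with
  | nil => simp [bigComb, full]
  | cons s l ih => simp [bigComb, comb, ← ih]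

lemma bigComb_A (l : List (RelStr ι)) : (bigComb l).A = {u | ∀ s ∈ l, u ∈ s.A} := by
  induction l with
  | nil => simp [bigComb, full]
  | cons s l ih =>
    simp only [bigComb] at ih ⊢
    ext u
    simp [comb, ih]

lemma bigComb_map_toList_dom {α : Type*} (S : Finset α) (f : α → RelStr ι) :
    (bigComb (S.toList.map f)).dom = ⋃ v ∈ S, (f v).dom := by
  simp [bigComb_dom]

lemma mem_bigComb_map_toList_A {α : Type*} (S : Finset α) (f : α → RelStr ι)
    {u : ι → Bool} :
    u ∈ (bigComb (S.toList.map f)).A ↔ ∀ v ∈ S, u ∈ (f v).A := by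
  simp [bigComb_A]

end RelStr

lemma Finset.exists_forall_not_rel_of_acyclic {α : Type*} {r : α → α → Prop}
    (hr : ∀ a, ¬ Relation.TransGen r a a) {S : Finset α} (hS : S.Nonempty) :
    ∃ v ∈ S, ∀ u ∈ S, ¬ r u v := by
  let t : S → S → Prop := fun a b => Relation.TransGen r a b
  have : IsTrans S t := ⟨fun _ _ _ => Relation.TransGen.trans⟩
  have : Std.Irrefl t := ⟨fun a => hr a⟩
  obtain ⟨⟨v, hv⟩, -, hmin⟩ := (Finite.wellFounded_of_trans_of_irrefl t).has_min Set.univ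
    ⟨⟨_, hS.choose_spec⟩, trivial⟩
  exact ⟨v, hv, fun u hu huv => hmin ⟨u, hu⟩ trivial (.single huv)⟩

namespace StructModel
variable {ι : Type*} (M : StructModel ι)

def IsRoot (v : ι) : Prop := v ∈ M.V ∧ ∀ u, ¬ M.E u v

lemma not_E_self (v : ι) : ¬ M.E v v := fun h => M.acyclic v (.single h)

lemma dom_eq_singleton_of_isRoot {v : ι} (hv : M.IsRoot v) : (M.s v).dom = {v} := by
  have hpa : {u | M.E u v} = ∅ := Set.eq_empty_of_forall_notMem hv.2
  rw [M.dom_eq v hv.1, hpa, insert_empty_eq]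

lemma combined_dom : M.combined.dom = M.V := by
  refine (RelStr.bigComb_map_toList_dom _ _).trans (Set.Subset.antisymm ?_ ?_)
  · simp only [Set.iUnion_subset_iff]
    intro v hv x hx
    rw [M.dom_eq v hv] at hx
    rcases hx with rfl | hxv
    exacts [hv, (M.edge_mem x v hxv).1]
  · intro v hv
    exact Set.mem_biUnion hv (by rw [M.dom_eq v hv]; exact Set.mem_insert v _)

lemma mem_combined_A {u : ι → Bool} : u ∈ M.combined.A ↔ ∀ v ∈ M.V, u ∈ (M.s v).A :=
  RelStr.mem_bigComb_map_toList_A _ _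

lemma exists_update_mem_A [DecidableEq ι] {v : ι} (hv : v ∈ M.V) (u : ι → Bool) :
    ∃ b, Function.update u v b ∈ (M.s v).A := by
  have hu : u ∈ ((M.s v).marg {w | M.E w v}).A := by
    rw [M.no_constrain v hv]; trivial
  obtain ⟨c, hc, huc⟩ := hu
  refine ⟨c v, (M.s v).cyl c _ (fun x hx => ?_) hc⟩
  rw [M.dom_eq v hv] at hx
  rcases hx with rfl | hxv
  · simp
  · have hxv' : x ≠ v := fun h => M.not_E_self v (h ▸ hxv)
    rw [Function.update_of_ne hxv', huc x ⟨by rw [M.dom_eq v hv]; exact .inr hxv, hxv⟩]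

lemma exists_repair_of_children_closed (S : Finset ι) (hSV : ↑S ⊆ (M.V : Set ι))
    (hS : ∀ v ∈ S, ∀ w, M.E v w → w ∈ S) (u : ι → Bool)
    (hu : ∀ w ∈ M.V, w ∉ S → u ∈ (M.s w).A) :
    ∃ a, (∀ w ∈ M.V, a ∈ (M.s w).A) ∧ ∀ x ∉ S, a x = u x := by
  classical
  induction S using Finset.strongInduction generalizing u with
  | H S ih =>
  rcases S.eq_empty_or_nonempty with rfl | hne
  · exact ⟨u, fun w hw => hu w hw (Finset.notMem_empty w), fun _ _ => rfl⟩
  obtain ⟨v, hvS, hv⟩ := Finset.exists_forall_not_rel_of_acyclic M.acyclic hne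
  obtain ⟨b, hb⟩ := M.exists_update_mem_A (hSV hvS) u
  have hu' : ∀ w ∈ M.V, w ∉ S.erase v → Function.update u v b ∈ (M.s w).A := by
    intro w hw hwS
    by_cases hwv : w = v
    · exact hwv ▸ hb
    have hwS : w ∉ S := fun h => hwS (Finset.mem_erase.2 ⟨hwv, h⟩)
    have hvw : v ∉ (M.s w).dom := by
      rw [M.dom_eq w hw]
      rintro (rfl | hvw)
      exacts [hwv rfl, hwS (hS v hvS w hvw)]
    exact ((M.s w).update_mem_A_iff hvw u b).2 (hu w hw hwS)
  have hclosed : ∀ x ∈ S.erase v, ∀ w, M.E x w → w ∈ S.erase v := by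
    intro x hx w hxw
    have hxS := Finset.mem_of_mem_erase hx
    exact Finset.mem_erase.2 ⟨fun hwv => hv x hxS (hwv ▸ hxw), hS x hxS w hxw⟩
  obtain ⟨a, ha, hau⟩ := ih (S.erase v) (Finset.erase_ssubset hvS)
    (fun x hx => hSV (Finset.mem_of_mem_erase hx)) hclosed _ hu'
  refine ⟨a, ha, fun x hx => ?_⟩
  rw [hau x fun h => hx (Finset.mem_of_mem_erase h),
    Function.update_of_ne (ne_of_mem_of_not_mem hvS hx).symm]

lemma exists_mem_combined_A_of_roots {R : Finset ι} (hR : ∀ v ∈ R, M.IsRoot v)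
    {u : ι → Bool} (hu : ∀ v ∈ R, u ∈ (M.s v).A) :
    ∃ a ∈ M.combined.A, ∀ x ∈ R, a x = u x := by
  classical
  obtain ⟨a, ha, hau⟩ := M.exists_repair_of_children_closed (M.V \ R) (by simp)
    (fun v _ w hvw =>
      Finset.mem_sdiff.2 ⟨(M.edge_mem v w hvw).2, fun hw => (hR w hw).2 v hvw⟩)
    u (fun w hw hwS => hu w (by simpa [hw] using hwS))
  exact ⟨a, M.mem_combined_A.2 ha, fun x hx => hau x fun h => (Finset.mem_sdiff.1 h).2 hx⟩

end StructModel

open RelStr in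
/-- Projecting the combined relation of a structured model onto the set `R` of
root nodes gives exactly the combination of the local relations of the roots. -/
theorem structModel_roots_marg {ι : Type*} (M : StructModel ι) (R : Finset ι)
    (hR : ∀ v, v ∈ R ↔ v ∈ M.V ∧ ∀ u, ¬ M.E u v) :
    marg M.combined (↑R : Set ι) = bigComb (R.toList.map M.s) := by
  have hRV : (R : Set ι) ⊆ M.V := fun v hv => ((hR v).1 hv).1
  have hdom : ∀ v ∈ R, (M.s v).dom = {v} := fun v hv =>
    M.dom_eq_singleton_of_isRoot ((hR v).1 hv)
  ext u
  · simp only [marg, M.combined_dom, Set.inter_eq_right.2 hRV, bigComb_map_toList_dom]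
    simp +contextual [hdom]
  · simp only [marg, M.combined_dom, Set.inter_eq_right.2 hRV, Set.mem_ofPred_eq,
      mem_bigComb_map_toList_A]
    constructor
    · rintro ⟨a, ha, hua⟩ v hv
      refine (M.s v).cyl a u (fun x hx => ?_) (M.mem_combined_A.1 ha v (hRV hv))
      rw [hdom v hv] at hx
      exact (hua x (hx ▸ hv)).symm
    · intro hu
      obtain ⟨a, ha, hau⟩ := M.exists_mem_combined_A_of_roots (fun v => (hR v).1) hu
      exact ⟨a, ha, fun x hx => (hau x hx).symm⟩
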